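/- Let G = (V,B) be a graph with non-adjacent vertices a, b, and let x : V → ℝ≥0 with ∑ x_v = 1. Let G_a (resp. G_b) be obtained by deleting b (resp. a) and transferring its weight to a (resp. b). Then a·L(G_a) + b·L(G_b) - (a+b)·L(G) = x_a x_b (x_a + x_b)·((1/2)(S_a + S_b - (S_a - S_b)^2) - S_{a,b}), where S_a = ∑_{v: av ∈ B} x_v, S_b = ∑_{v: bv ∈ B} x_v, and S_{a,b} = ∑_{v: {a,b,v} ∈ E(BF(G))} x_v. -/

import Mathlib

open Finset

/-- Number of edges of `G` among the three pairs of the triple `(u,v,w)`. -/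
def edgeCount3 {V : Type*} (G : SimpleGraph V) [DecidableRel G.Adj] (u v w : V) : ℕ :=
  (if G.Adj u v then 1 else 0) + (if G.Adj u w then 1 else 0) + (if G.Adj v w then 1 else 0)

/-- Lagrangian of the 3-graph `BF(G)` (triples spanning at least 2 edges of `G`). -/
noncomputable def lagrangianBF {V : Type*} [Fintype V] [DecidableEq V]
    (G : SimpleGraph V) [DecidableRel G.Adj] (x : V → ℝ) : ℝ :=
  (1 / 6) * ∑ u : V, ∑ v : V, ∑ w : V,
      (if u ≠ v ∧ u ≠ w ∧ v ≠ w ∧ 2 ≤ edgeCount3 G u v w then x u * x v * x w else 0)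
    + (1 / 2) * ∑ u : V, ∑ v : V, (if G.Adj u v then x u ^ 2 * x v else 0)
    - (1 / 2) * ((1 / 2) * ∑ u : V, ∑ v : V, (if G.Adj u v then x u * x v else 0)) ^ 2

/-- Deleting vertex `b` and transferring its weight to `a` is modeled by
setting the weight of `b` to `0` and giving `a` the weight `x a + x b`. -/
noncomputable def transferWeight {V : Type*} [DecidableEq V] (x : V → ℝ) (a b : V) : V → ℝ :=
  Function.update (Function.update x b 0) a (x a + x b)

/-!
Fix every weight except those of `a` and `b`, and put `s = x a`, `t = x b`. No edge of `BF(G)`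
contains a vertex twice, and `a`, `b` are non-adjacent, so the Lagrangian is
`c + α s + β t + S_{a,b} s t + (S_a s² + S_b t²)/2 − (e + S_a s + S_b t)²/2`
for constants `c, α, β, e`. For any such function `f` the combination
`s f(s+t, 0) + t f(0, s+t) − (s+t) f(s, t)` loses its constant and linear parts, and what remains
is `s t (s+t) ((S_a + S_b − (S_a − S_b)²)/2 − S_{a,b})`.
-/

theorem edgeCount3_swap₁₂ {V : Type*} (G : SimpleGraph V) [DecidableRel G.Adj] (u v c : V) :
    edgeCount3 G u v c = edgeCount3 G v u c := by
  simp only [edgeCount3, G.adj_comm v u]; ring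

theorem edgeCount3_swap₂₃ {V : Type*} (G : SimpleGraph V) [DecidableRel G.Adj] (u v c : V) :
    edgeCount3 G u v c = edgeCount3 G u c v := by
  simp only [edgeCount3, G.adj_comm c v]; ring

section

variable {V : Type*} [DecidableEq V] (G : SimpleGraph V) [DecidableRel G.Adj]

def bfEdgeIndicator (u v c : V) : ℝ :=
  if u ≠ v ∧ u ≠ c ∧ v ≠ c ∧ 2 ≤ edgeCount3 G u v c then 1 else 0

theorem bfEdgeIndicator_swap₁₂ (u v c : V) :
    bfEdgeIndicator G u v c = bfEdgeIndicator G v u c := by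
  simp only [bfEdgeIndicator, edgeCount3_swap₁₂ G u v]
  grind

theorem bfEdgeIndicator_swap₂₃ (u v c : V) :
    bfEdgeIndicator G u v c = bfEdgeIndicator G u c v := by
  simp only [bfEdgeIndicator, edgeCount3_swap₂₃ G u v]
  grind

theorem bfEdgeIndicator_self_left (u c : V) : bfEdgeIndicator G u u c = 0 := by
  simp [bfEdgeIndicator]

theorem bfEdgeIndicator_self_right (u v : V) : bfEdgeIndicator G u v v = 0 := by
  simp [bfEdgeIndicator]

theorem add_single_sq {R : Type*} [Semiring R] {y : V → R} {a : V} (hya : y a = 0) (s : R) :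
    (y + Pi.single a s) ^ 2 = y ^ 2 + Pi.single a (s ^ 2) := by
  ext u
  by_cases hu : u = a
  · subst hu; simp [hya]
  · simp [hu]

theorem update_update_eq_add_single_add_single {R : Type*} [AddZeroClass R] (x : V → R)
    {a b : V} (hab : a ≠ b) (s t : R) :
    Function.update (Function.update x b t) a s
      = Function.update (Function.update x b 0) a 0 + Pi.single b t + Pi.single a s := by
  ext v
  by_cases hva : v = a
  · subst hva; simp [hab]
  by_cases hvb : v = b
  · subst hvb; simp [hva]
  simp [hva, hvb]

end

section

variable {V : Type*} [Fintype V] [DecidableEq V] {R : Type*} [CommSemiring R]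

theorem sum_mul_add_single (m q : V → R) (a : V) (r : R) :
    ∑ v, m v * (q + Pi.single a r : V → R) v = ∑ v, m v * q v + r * m a := by
  simp [mul_add, Finset.sum_add_distrib, Pi.single_apply, mul_comm]

theorem sum_sum_mul_add_single_mul_add_single (M : V → V → R) (p q : V → R) (a : V)
    (s r : R) :
    ∑ u, ∑ v, M u v * ((p + Pi.single a s : V → R) u * (q + Pi.single a r : V → R) v)
      = ∑ u, ∑ v, M u v * (p u * q v) + s * ∑ v, M a v * q v + r * ∑ u, M u a * p u
        + s * r * M a a := by
  simp [mul_add, Finset.sum_add_distrib, Pi.single_apply, Finset.mul_sum, mul_comm,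
    mul_left_comm]
  ring

theorem sum3_mul_add_single (K : V → V → V → R) (hK₁₂ : ∀ u v c, K u v c = K v u c)
    (hK₂₃ : ∀ u v c, K u v c = K u c v) (hK₀ : ∀ u c, K u u c = 0) (y : V → R)
    (a : V) (s : R) :
    ∑ u, ∑ v, ∑ c, K u v c
        * ((y + Pi.single a s : V → R) u * (y + Pi.single a s : V → R) v
          * (y + Pi.single a s : V → R) c)
      = ∑ u, ∑ v, ∑ c, K u v c * (y u * y v * y c)
        + 3 * s * ∑ v, ∑ c, K a v c * (y v * y c) := by
  have h₁ : ∀ u c, K u a c = K a u c := fun u c => hK₁₂ u a c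
  have h₂ : ∀ u v, K u v a = K a u v := fun u v => by rw [hK₂₃, hK₁₂]
  have h₃ : ∀ u, K u a a = 0 := fun u => by rw [h₁, hK₂₃, hK₀]
  have h₄ : ∀ v, K a v a = 0 := fun v => by rw [hK₂₃, hK₀]
  simp [mul_add, add_mul, Finset.sum_add_distrib, Pi.single_apply, hK₀, h₃, h₄]
  simp only [h₁, h₂, Finset.mul_sum, ← Finset.sum_add_distrib]
  exact Finset.sum_congr rfl fun _ _ => Finset.sum_congr rfl fun _ _ => by ring

theorem lagrangianBF_eq (G : SimpleGraph V) [DecidableRel G.Adj] (x : V → ℝ) :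
    lagrangianBF G x = (1 / 6) * ∑ u, ∑ v, ∑ c, bfEdgeIndicator G u v c * (x u * x v * x c)
      + (1 / 2) * ∑ u, ∑ v, G.adjMatrix ℝ u v * ((x ^ 2) u * x v)
      - (1 / 2) * ((1 / 2) * ∑ u, ∑ v, G.adjMatrix ℝ u v * (x u * x v)) ^ 2 := by
  simp only [lagrangianBF, bfEdgeIndicator, SimpleGraph.adjMatrix_apply, boole_mul,
    Pi.pow_apply]

theorem lagrangianBF_add_single_add_single (G : SimpleGraph V) [DecidableRel G.Adj] {a b : V}
    (hab : a ≠ b) (hnadj : ¬ G.Adj a b) {y : V → ℝ} (hya : y a = 0) (hyb : y b = 0) :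
    ∃ c α β e : ℝ, ∀ s t : ℝ,
      lagrangianBF G (y + Pi.single b t + Pi.single a s)
        = c + α * s + β * t + (∑ v, bfEdgeIndicator G a b v * y v) * s * t
          + ((∑ v, G.adjMatrix ℝ a v * y v) * s ^ 2
              + (∑ v, G.adjMatrix ℝ b v * y v) * t ^ 2) / 2
          - (e + (∑ v, G.adjMatrix ℝ a v * y v) * s
              + (∑ v, G.adjMatrix ℝ b v * y v) * t) ^ 2 / 2 := by
  have hcol : ∀ (c : V) (p : V → ℝ),
      ∑ u, G.adjMatrix ℝ u c * p u = ∑ u, G.adjMatrix ℝ c u * p u := fun c p =>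
    Finset.sum_congr rfl fun u _ => by rw [G.isSymm_adjMatrix.apply c u]
  have hAab : G.adjMatrix ℝ a b = 0 := by simp [hnadj]
  have hAself : ∀ u, G.adjMatrix ℝ u u = 0 := fun u => by simp
  have hKa : ∀ v, bfEdgeIndicator G a v b = bfEdgeIndicator G a b v := fun v =>
    bfEdgeIndicator_swap₂₃ G a v b
  refine ⟨(1 / 6) * ∑ u, ∑ v, ∑ c, bfEdgeIndicator G u v c * (y u * y v * y c)
      + (1 / 2) * ∑ u, ∑ v, G.adjMatrix ℝ u v * ((y ^ 2) u * y v),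
    (1 / 2) * (∑ v, ∑ c, bfEdgeIndicator G a v c * (y v * y c)
      + ∑ u, G.adjMatrix ℝ a u * (y ^ 2) u),
    (1 / 2) * (∑ v, ∑ c, bfEdgeIndicator G b v c * (y v * y c)
      + ∑ u, G.adjMatrix ℝ b u * (y ^ 2) u),
    (1 / 2) * ∑ u, ∑ v, G.adjMatrix ℝ u v * (y u * y v), fun s t => ?_⟩
  have hza : (y + Pi.single b t : V → ℝ) a = 0 := by simp [hya, hab]
  rw [lagrangianBF_eq, add_single_sq hza, add_single_sq hyb]
  simp only [sum3_mul_add_single (bfEdgeIndicator G) (bfEdgeIndicator_swap₁₂ G)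
      (bfEdgeIndicator_swap₂₃ G) (bfEdgeIndicator_self_left G),
    sum_sum_mul_add_single_mul_add_single,
    sum_sum_mul_add_single_mul_add_single (G.adjMatrix ℝ), sum_mul_add_single,
    hcol, hKa, hAab, hAself, bfEdgeIndicator_self_right]
  ring

theorem lagrangianBF_update_update (G : SimpleGraph V) [DecidableRel G.Adj] {a b : V}
    (hab : a ≠ b) (hnadj : ¬ G.Adj a b) (x : V → ℝ) :
    ∃ c α β e : ℝ, ∀ s t : ℝ,
      lagrangianBF G (Function.update (Function.update x b t) a s)
        = c + α * s + β * t
          + (∑ v, if v ≠ a ∧ v ≠ b ∧ 2 ≤ edgeCount3 G a b v then x v else 0) * s * t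
          + ((∑ v, if G.Adj a v then x v else 0) * s ^ 2
              + (∑ v, if G.Adj b v then x v else 0) * t ^ 2) / 2
          - (e + (∑ v, if G.Adj a v then x v else 0) * s
              + (∑ v, if G.Adj b v then x v else 0) * t) ^ 2 / 2 := by
  set y := Function.update (Function.update x b 0) a 0
  have hya : y a = 0 := by simp [y]
  have hyb : y b = 0 := by simp [y, hab.symm]
  have hy : ∀ v, v ≠ a → v ≠ b → y v = x v := fun v hva hvb => by simp [y, hva, hvb]
  have hS : ∀ c, ¬ G.Adj c a → ¬ G.Adj c b →
      (∑ v, if G.Adj c v then x v else 0) = ∑ v, G.adjMatrix ℝ c v * y v := by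
    intro c hca hcb
    refine Finset.sum_congr rfl fun v _ => ?_
    by_cases hva : v = a
    · subst hva; simp [hca, hya]
    by_cases hvb : v = b
    · subst hvb; simp [hcb, hyb]
    simp [hy v hva hvb]
  have hP : (∑ v, if v ≠ a ∧ v ≠ b ∧ 2 ≤ edgeCount3 G a b v then x v else 0)
      = ∑ v, bfEdgeIndicator G a b v * y v := by
    refine Finset.sum_congr rfl fun v _ => ?_
    by_cases hva : v = a
    · subst hva; simp [hya]
    by_cases hvb : v = b
    · subst hvb; simp [hyb]
    simp [bfEdgeIndicator, hy v hva hvb, hva, hvb, hab, Ne.symm hva, Ne.symm hvb]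
  obtain ⟨c, α, β, e, hL⟩ := lagrangianBF_add_single_add_single G hab hnadj hya hyb
  refine ⟨c, α, β, e, fun s t => ?_⟩
  rw [update_update_eq_add_single_add_single x hab, hL, hS a G.irrefl hnadj,
    hS b (fun h => hnadj h.symm) G.irrefl, hP]

end

theorem weight_transfer_combination {f : ℝ → ℝ → ℝ} {c α β e P Sa Sb : ℝ}
    (hf : ∀ s t, f s t = c + α * s + β * t + P * s * t + (Sa * s ^ 2 + Sb * t ^ 2) / 2
      - (e + Sa * s + Sb * t) ^ 2 / 2) (s t : ℝ) :
    s * f (s + t) 0 + t * f 0 (s + t) - (s + t) * f s t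
      = s * t * (s + t) * ((1 / 2) * (Sa + Sb - (Sa - Sb) ^ 2) - P) := by
  rw [hf, hf, hf]
  ring

theorem deletion_identity_general {V : Type*} [Fintype V] [DecidableEq V]
    (G : SimpleGraph V) [DecidableRel G.Adj] (a b : V) (hab : a ≠ b)
    (hnadj : ¬ G.Adj a b) (x : V → ℝ) :
    x a * lagrangianBF G (transferWeight x a b)
      + x b * lagrangianBF G (transferWeight x b a)
      - (x a + x b) * lagrangianBF G x
    = x a * x b * (x a + x b) *
        ((1 / 2) * ((∑ v : V, if G.Adj a v then x v else 0)
            + (∑ v : V, if G.Adj b v then x v else 0)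
            - ((∑ v : V, if G.Adj a v then x v else 0)
                - (∑ v : V, if G.Adj b v then x v else 0)) ^ 2)
          - ∑ v : V, if v ≠ a ∧ v ≠ b ∧ 2 ≤ edgeCount3 G a b v then x v else 0) := by
  obtain ⟨c, α, β, e, hL⟩ := lagrangianBF_update_update G hab hnadj x
  have h := weight_transfer_combination hL (x a) (x b)
  simp only [Function.update_eq_self] at h
  rw [transferWeight, transferWeight, Function.update_comm hab, add_comm (x b)]
  exact h

theorem deletion_identity {V : Type*} [Fintype V] [DecidableEq V]
    (G : SimpleGraph V) [DecidableRel G.Adj] (a b : V) (hab : a ≠ b)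
    (hnadj : ¬ G.Adj a b) (x : V → ℝ)
    (hx : ∀ v, 0 ≤ x v) (hsum : ∑ v : V, x v = 1) :
    x a * lagrangianBF G (transferWeight x a b)
      + x b * lagrangianBF G (transferWeight x b a)
      - (x a + x b) * lagrangianBF G x
    = x a * x b * (x a + x b) *
        ((1 / 2) * ((∑ v : V, if G.Adj a v then x v else 0)
            + (∑ v : V, if G.Adj b v then x v else 0)
            - ((∑ v : V, if G.Adj a v then x v else 0)
                - (∑ v : V, if G.Adj b v then x v else 0)) ^ 2)
          - ∑ v : V, if v ≠ a ∧ v ≠ b ∧ 2 ≤ edgeCount3 G a b v then x v else 0) :=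
  deletion_identity_general G a b hab hnadj x
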